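/- Let M be a finite matroid with linearly ordered ground set E, B a base of M with e ∉ B where e is not a loop, and C = ci(e,B) the fundamental circuit. Then for every b ∈ B∖(C∖{e}), the fundamental bond of b with respect to the base B∖(C∖{e}) of the contraction M/C equals the fundamental bond of b with respect to B in M: bo_{M/C}(b, B∖(C∖{e})) = bo_M(b, B). Consequently, b is internally active in B (with respect to M) if and only if b is internally active in B∖(C∖{e}) (with respect to M/C). -/

import Mathlib

/-- A circuit of a matroid: a minimal dependent subset of the ground set. -/
def Matroid.IsCircuit' {α : Type*} (M : Matroid α) (C : Set α) : Prop :=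
  C ⊆ M.E ∧ ¬ M.Indep C ∧ ∀ D ⊂ C, M.Indep D

/-- The contraction `M/C` of a matroid, defined as the dual of the
restriction of the dual to the complement of `C`. -/
noncomputable def Matroid.contract' {α : Type*} (M : Matroid α) (C : Set α) :
    Matroid α :=
  ((M✶).restrict (M.E \ C))✶

/-- `D` is the fundamental bond `bo_M(b,B)` of `b ∈ B` with respect to the base
`B`: the (unique) cocircuit of `M` contained in `(E∖B) ∪ {b}`. -/
def Matroid.IsBond {α : Type*} (M : Matroid α) (b : α) (B : Set α)
    (D : Set α) : Prop :=
  (M✶).IsCircuit' D ∧ b ∈ D ∧ D ⊆ insert b (M.E \ B)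

/-- `b` is internally active in the base `B` of `M` (with respect to a linear
order on the ground set): `b` is the minimum element of its fundamental bond. -/
def Matroid.InternallyActive {α : Type*} [LinearOrder α] (M : Matroid α)
    (b : α) (B : Set α) : Prop :=
  ∀ D : Set α, M.IsBond b B D → ∀ x ∈ D, b ≤ x

/-!
The cocircuits of `M / C` are exactly the cocircuits of `M` disjoint from `C`. A cocircuit
contained in `insert b (E \ B)` with `b ∉ C` can meet `C ⊆ insert e B` at most in `e`, and a
circuit never meets a cocircuit in exactly one element, so it avoids `C` altogether.
-/

namespace Matroid

variable {α : Type*} {M : Matroid α} {B C D : Set α} {b e : α}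

lemma isCircuit'_iff : M.IsCircuit' C ↔ M.IsCircuit C := by
  rw [isCircuit_iff_forall_ssubset, Dep, IsCircuit']
  tauto

lemma isBond_iff : M.IsBond b B D ↔ M.IsCocircuit D ∧ b ∈ D ∧ D ⊆ insert b (M.E \ B) := by
  rw [IsBond, isCircuit'_iff, isCocircuit_def]

lemma contract'_eq_contract (M : Matroid α) (C : Set α) : M.contract' C = M ／ C := rfl

lemma IsCircuit.disjoint_of_isCocircuit_of_inter_subset_singleton (hC : M.IsCircuit C)
    (hD : M.IsCocircuit D) (hCD : C ∩ D ⊆ {e}) : Disjoint C D := by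
  rw [Set.disjoint_iff_inter_eq_empty]
  rcases Set.subset_singleton_iff_eq.1 hCD with h | h
  · exact h
  · exact absurd h (hC.inter_isCocircuit_ne_singleton hD)

lemma contract_isBond_iff_isBond (hC : M.IsCircuit C) (hCB : C ⊆ insert e B) (hbC : b ∉ C) :
    (M ／ C).IsBond b (B \ (C \ {e})) D ↔ M.IsBond b B D := by
  simp only [isBond_iff, contract_isCocircuit_iff, contract_ground]
  constructor
  · rintro ⟨⟨hD, -⟩, hbD, hDsub⟩
    refine ⟨hD, hbD, fun x hx => ?_⟩
    rcases hDsub hx with rfl | ⟨⟨hxE, hxC⟩, hxB⟩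
    · exact Set.mem_insert _ _
    · exact Or.inr ⟨hxE, fun hxB' => hxB ⟨hxB', fun hxC' => hxC hxC'.1⟩⟩
  · rintro ⟨hD, hbD, hDsub⟩
    have hCD : C ∩ D ⊆ {e} := by
      rintro x ⟨hxC, hxD⟩
      rcases hDsub hxD with rfl | ⟨-, hxB⟩
      · exact absurd hxC hbC
      · exact (hCB hxC).resolve_right hxB
    have hDC : Disjoint D C :=
      (hC.disjoint_of_isCocircuit_of_inter_subset_singleton hD hCD).symm
    refine ⟨⟨hD, hDC⟩, hbD, fun x hx => ?_⟩
    rcases hDsub hx with rfl | ⟨hxE, hxB⟩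
    · exact Set.mem_insert _ _
    · exact Or.inr ⟨⟨hxE, hDC.notMem_of_mem_left hx⟩, fun hxB' => hxB hxB'.1⟩

end Matroid

theorem bond_contract_fundCircuit_general {α : Type*} [LinearOrder α]
    (M : Matroid α) (e : α)
    (B : Set α) (heB : e ∉ B)
    (C : Set α) (hC : M.IsCircuit' C) (hCB : C ⊆ insert e B)
    (b : α) (hb : b ∈ B \ (C \ {e})) :
    (∀ D : Set α,
        (M.contract' C).IsBond b (B \ (C \ {e})) D ↔ M.IsBond b B D) ∧
    (M.InternallyActive b B ↔
        (M.contract' C).InternallyActive b (B \ (C \ {e}))) := by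
  have hbC : b ∉ C := fun h => hb.2 ⟨h, by rintro rfl; exact heB hb.1⟩
  have hbond : ∀ D, (M.contract' C).IsBond b (B \ (C \ {e})) D ↔ M.IsBond b B D := fun _ => by
    rw [Matroid.contract'_eq_contract]
    exact Matroid.contract_isBond_iff_isBond (Matroid.isCircuit'_iff.1 hC) hCB hbC
  exact ⟨hbond, forall_congr' fun D => imp_congr_left (hbond D).symm⟩

/-- **Fundamental bonds survive contraction of the fundamental circuit.**
Let `M` be a matroid on a linearly ordered ground set, `B` a base, `e ∉ B` a
non-loop element, and `C = ci(e,B)` the fundamental circuit (the unique circuit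
in `B ∪ {e}`).  Then for every `b ∈ B∖(C∖{e})`, the fundamental bond of `b`
with respect to the base `B∖(C∖{e})` of the contraction `M/C` equals the
fundamental bond of `b` with respect to `B` in `M`:
`bo_{M/C}(b, B∖(C∖{e})) = bo_M(b, B)`.  Consequently `b` is internally active
in `B` (w.r.t. `M`) iff `b` is internally active in `B∖(C∖{e})` (w.r.t. `M/C`). -/
theorem bond_contract_fundCircuit {α : Type*} [LinearOrder α]
    (M : Matroid α) (e : α)
    (heE : e ∈ M.E) (heNonloop : e ∉ M.closure ∅)
    (B : Set α) (hB : M.IsBase B) (heB : e ∉ B)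
    (C : Set α) (hC : M.IsCircuit' C) (heC : e ∈ C) (hCB : C ⊆ insert e B)
    (b : α) (hb : b ∈ B \ (C \ {e})) :
    (∀ D : Set α,
        (M.contract' C).IsBond b (B \ (C \ {e})) D ↔ M.IsBond b B D) ∧
    (M.InternallyActive b B ↔
        (M.contract' C).InternallyActive b (B \ (C \ {e}))) :=
  bond_contract_fundCircuit_general M e B heB C hC hCB b hb
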